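/- arXiv:1905.09566 — 10 statements merged into one kernel-verified Lean document; each statement's English description precedes it below -/
import Mathlib

section
/- Let C be a monoidal category and e an object of C equipped with morphisms μ : e ⊗ e ⟶ e and δ : e ⟶ e ⊗ e satisfying the specialness axiom δ ≫ μ = 𝟙 e and the two Frobenius axioms μ ≫ δ = (δ ▷ e) ≫ (α_ e e e).hom ≫ (e ◁ μ) and μ ≫ δ = (e ◁ δ) ≫ (α_ e e e).inv ≫ (μ ▷ e). Then μ is associative: (μ ▷ e) ≫ μ = (α_ e e e).hom ≫ (e ◁ μ) ≫ μ. -/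
open CategoryTheory MonoidalCategory

/-- Associativity of the multiplication of a nonunital special Frobenius algebra
follows from specialness and the two Frobenius axioms. -/
theorem condensation_algebra_mul_assoc {C : Type*} [Category C] [MonoidalCategory C]
    (e : C) (μ : e ⊗ e ⟶ e) (δ : e ⟶ e ⊗ e)
    (special : δ ≫ μ = 𝟙 e)
    (frobenius₁ : μ ≫ δ = (δ ▷ e) ≫ (α_ e e e).hom ≫ (e ◁ μ))
    (frobenius₂ : μ ≫ δ = (e ◁ δ) ≫ (α_ e e e).inv ≫ (μ ▷ e)) :
    (μ ▷ e) ≫ μ = (α_ e e e).hom ≫ (e ◁ μ) ≫ μ := by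
  have h1 : μ = (δ ▷ e) ≫ (α_ e e e).hom ≫ (e ◁ μ) ≫ μ := by
    conv_lhs => rw [show μ = (μ ≫ δ) ≫ μ by rw [Category.assoc, special, Category.comp_id]]
    rw [frobenius₁]; simp [Category.assoc]
  have h2 : μ = (e ◁ δ) ≫ (α_ e e e).inv ≫ (μ ▷ e) ≫ μ := by
    conv_lhs => rw [show μ = (μ ≫ δ) ≫ μ by rw [Category.assoc, special, Category.comp_id]]
    rw [frobenius₂]; simp [Category.assoc]
  have lhs_eq : (μ ▷ e) ≫ μ
      = (((e ◁ δ) ≫ (α_ e e e).inv ≫ (μ ▷ e)) ▷ e) ≫ (α_ e e e).hom ≫ (e ◁ μ) ≫ μ := by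
    rw [← frobenius₂, comp_whiskerRight, Category.assoc]
    exact congrArg (fun f => (μ ▷ e) ≫ f) h1
  have rhs_eq : (α_ e e e).hom ≫ (e ◁ μ) ≫ μ
      = (α_ e e e).hom ≫ (e ◁ ((δ ▷ e) ≫ (α_ e e e).hom ≫ (e ◁ μ))) ≫ (α_ e e e).inv ≫ (μ ▷ e) ≫ μ := by
    rw [← frobenius₁, MonoidalCategory.whiskerLeft_comp, Category.assoc]
    congr 1
    exact congrArg (fun f => (e ◁ μ) ≫ f) h2
  rw [lhs_eq]
  conv_rhs => rw [rhs_eq]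
  simp only [comp_whiskerRight, MonoidalCategory.whiskerLeft_comp, Category.assoc]
  rw [associator_naturality_left_assoc]
  rw [associator_inv_naturality_right_assoc]
  rw [← whisker_exchange_assoc]
  monoidal
end

section
/- Let C be a monoidal category and e an object of C equipped with morphisms μ : e ⊗ e ⟶ e and δ : e ⟶ e ⊗ e satisfying the specialness axiom δ ≫ μ = 𝟙 e and the two Frobenius axioms μ ≫ δ = (δ ▷ e) ≫ (α_ e e e).hom ≫ (e ◁ μ) and μ ≫ δ = (e ◁ δ) ≫ (α_ e e e).inv ≫ (μ ▷ e). Then δ is coassociative: δ ≫ (δ ▷ e) ≫ (α_ e e e).hom = δ ≫ (e ◁ δ). -/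
open CategoryTheory MonoidalCategory

/-- Coassociativity of the comultiplication of a nonunital special Frobenius algebra
follows from specialness and the two Frobenius axioms. -/
theorem condensation_algebra_comul_coassoc {C : Type*} [Category C] [MonoidalCategory C]
    (e : C) (μ : e ⊗ e ⟶ e) (δ : e ⟶ e ⊗ e)
    (special : δ ≫ μ = 𝟙 e)
    (frobenius₁ : μ ≫ δ = (δ ▷ e) ≫ (α_ e e e).hom ≫ (e ◁ μ))
    (frobenius₂ : μ ≫ δ = (e ◁ δ) ≫ (α_ e e e).inv ≫ (μ ▷ e)) :
    δ ≫ (δ ▷ e) ≫ (α_ e e e).hom = δ ≫ (e ◁ δ) := by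
  have δeq : δ = δ ≫ (e ◁ δ) ≫ (α_ e e e).inv ≫ μ ▷ e := by
    rw [← frobenius₂, ← Category.assoc, special, Category.id_comp]
  have w1 : μ ▷ e ≫ δ ▷ e =
      (δ ▷ e) ▷ e ≫ (α_ e e e).hom ▷ e ≫ (e ◁ μ) ▷ e := by
    rw [← comp_whiskerRight, frobenius₁]
    simp only [comp_whiskerRight, Category.assoc]
  calc δ ≫ δ ▷ e ≫ (α_ e e e).hom
      = (δ ≫ (e ◁ δ) ≫ (α_ e e e).inv ≫ μ ▷ e) ≫ δ ▷ e ≫ (α_ e e e).hom := by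
        rw [← δeq]
    _ = δ ≫ e ◁ δ ≫ (α_ e e e).inv ≫ μ ▷ e ≫ δ ▷ e ≫ (α_ e e e).hom := by
        simp only [Category.assoc]
    _ = δ ≫ e ◁ δ := by
        slice_lhs 4 5 => rw [w1]
        slice_lhs 6 7 => rw [associator_naturality_middle e μ e]
        slice_lhs 5 6 => rw [← pentagon_hom_hom_inv_hom_hom]
        slice_lhs 4 5 => rw [associator_naturality_left δ e e]
        slice_lhs 3 4 => rw [Iso.inv_hom_id]
        simp only [Category.id_comp, Category.comp_id, Category.assoc]
        slice_lhs 2 3 => rw [whisker_exchange]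
        slice_lhs 3 4 => rw [associator_naturality_right e e δ]
        slice_lhs 4 6 => rw [← MonoidalCategory.whiskerLeft_comp,
          ← MonoidalCategory.whiskerLeft_comp, ← frobenius₂,
          MonoidalCategory.whiskerLeft_comp]
        slice_lhs 2 4 => rw [← frobenius₁]
        slice_lhs 1 2 => rw [special]
        simp
end

section
/- Let C be a small category and P : Cᵒᵖ ⥤ Type a presheaf that is tiny, i.e. such that the functor coyoneda.obj (Opposite.op P) : (Cᵒᵖ ⥤ Type) ⥤ Type preserves all small colimits. Then P is a retract of a representable presheaf: there exist an object X of C and natural transformations s : P ⟶ yoneda.obj X and r : yoneda.obj X ⟶ P with s ≫ r = 𝟙 P. -/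
open CategoryTheory CategoryTheory.Limits

theorem CategoryTheory.Limits.IsColimit.exists_comp_ι_eq_of_preservesColimit
    {J E : Type*} [Category J] [Category E] {F : J ⥤ E} {c : Cocone F} (hc : IsColimit c)
    {S : E} [PreservesColimit F (coyoneda.obj (Opposite.op S))] (f : S ⟶ c.pt) :
    ∃ (j : J) (g : S ⟶ F.obj j), g ≫ c.ι.app j = f :=
  Types.jointly_surjective _ (isColimitOfPreserves (coyoneda.obj (Opposite.op S)) hc) f

/-- A tiny presheaf is a retract (condensate) of a representable presheaf. -/
theorem tiny_presheaf_retract_of_representable {C : Type} [SmallCategory C]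
    (P : Cᵒᵖ ⥤ Type)
    (tiny : Nonempty (PreservesColimits (coyoneda.obj (Opposite.op P) :
      (Cᵒᵖ ⥤ Type) ⥤ Type))) :
    ∃ (X : C) (s : P ⟶ yoneda.obj X) (r : yoneda.obj X ⟶ P), s ≫ r = 𝟙 P := by
  obtain ⟨_⟩ := tiny
  -- `P` is the colimit of all `j.hom : yoneda.obj j.left ⟶ P`, and `𝟙 P` factors through one of them.
  obtain ⟨j, s, hs⟩ :=
    (Presheaf.isColimitTautologicalCocone P).exists_comp_ι_eq_of_preservesColimit (𝟙 P)
  exact ⟨j.left, s, j.hom, hs⟩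
end

section
/- Let C be a small category. Then the Karoubi envelope Karoubi C is equivalent to the full subcategory of the presheaf category Cᵒᵖ ⥤ Type consisting of the tiny presheaves, i.e. those P for which the functor coyoneda.obj (Opposite.op P) : (Cᵒᵖ ⥤ Type) ⥤ Type preserves all small colimits. In other words, the Karoubi envelope is the Cauchy completion. -/
/-!
Hom(S, −) preserves colimits when S is representable (it is evaluation, by Yoneda), and this
property passes to retracts. Conversely, a tiny presheaf P is the colimit of representables over
its category of elements, and Hom(P, −) commutes with that colimit, so `𝟙 P` factors through one
of the colimit injections: P is a retract of a representable. The tiny presheaves therefore form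
an idempotent complete category T in which every object is a retract of a representable, and for
such a T the functor Kar(C) → Kar(T) induced by Yoneda is an equivalence, while Kar(T) ≌ T.
-/

open CategoryTheory CategoryTheory.Limits CategoryTheory.Idempotents

open Opposite

namespace CategoryTheory

universe w w' v₁ v₂ u u₁ u₂

section Tiny

variable {D : Type u₁} [Category.{v₁} D] {E : Type u₂} [Category.{v₂} E]

lemma Retract.preservesColimit {J : Type w} [Category.{w'} J] {K : J ⥤ D} {F G : D ⥤ E}
    (h : Retract G F) [PreservesColimit K F] : PreservesColimit K G where
  preserves {c} hc := by
    have hF := isColimitOfPreserves F hc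
    have hir (X : D) : h.i.app X ≫ h.r.app X = 𝟙 _ := congr_app h.retract X
    let r (s : Cocone (K ⋙ G)) : Cocone (K ⋙ F) := (Cocone.precompose (K.whiskerLeft h.r)).obj s
    refine ⟨{ desc s := h.i.app c.pt ≫ hF.desc (r s), fac s j := ?_, uniq s m hm := ?_ }⟩
    · have := hF.fac (r s) j
      dsimp [r] at this ⊢
      rw [h.i.naturality_assoc, this, reassoc_of% hir]
    · have : h.r.app c.pt ≫ m = hF.desc (r s) := hF.uniq (r s) _ fun j => by
        dsimp [r]
        rw [h.r.naturality_assoc, ← hm]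
        rfl
      rw [← this, reassoc_of% hir]

lemma Retract.preservesColimitsOfSize {F G : D ⥤ E} (h : Retract G F)
    [PreservesColimitsOfSize.{w, w'} F] : PreservesColimitsOfSize.{w, w'} G where
  preservesColimitsOfShape := { preservesColimit := h.preservesColimit }

variable (E) in
def isTiny : ObjectProperty E := fun S => Nonempty (PreservesColimits (coyoneda.obj (op S)))

instance : (isTiny E).IsStableUnderRetracts where
  of_retract h := fun ⟨_⟩ => ⟨(h.op.map coyoneda).preservesColimitsOfSize⟩

end Tiny

lemma isIdempotentComplete_of_hasEqualizers (C : Type u₁) [Category.{v₁} C] [HasEqualizers C] :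
    IsIdempotentComplete C :=
  (isIdempotentComplete_iff_hasEqualizer_of_id_and_idempotent C).2 fun _ _ _ => inferInstance

instance ObjectProperty.isIdempotentComplete_fullSubcategory {C : Type u₁} [Category.{v₁} C]
    [IsIdempotentComplete C] (P : ObjectProperty C) [P.IsStableUnderRetracts] :
    IsIdempotentComplete P.FullSubcategory where
  idempotents_split X p hp := by
    obtain ⟨Y, i, e, hie, hei⟩ :=
      IsIdempotentComplete.idempotents_split X.obj p.hom (congr_arg (·.hom) hp)
    exact ⟨⟨Y, P.prop_of_retract ⟨i, e, hie⟩ X.property⟩, ObjectProperty.homMk i,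
      ObjectProperty.homMk e, by ext; exact hie, by ext; exact hei⟩

section Karoubi

variable {C : Type u₁} [Category.{v₁} C] {D : Type u₂} [Category.{v₂} D] (F : C ⥤ D)

@[simps]
def Functor.mapKaroubi : Karoubi C ⥤ Karoubi D where
  obj P := ⟨F.obj P.X, F.map P.p, by rw [← F.map_comp, P.idem]⟩
  map f := ⟨F.map f.f, by dsimp only; rw [← F.map_comp, ← F.map_comp, f.comm]⟩

instance [F.Faithful] : F.mapKaroubi.Faithful where
  map_injective h := Karoubi.hom_ext _ _ (F.map_injective (congr_arg Karoubi.Hom.f h))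

instance [F.Full] : F.mapKaroubi.Full where
  map_surjective {P Q} f := by
    -- `f.f` is typed through `F.mapKaroubi.obj`, which `simp` does not see through
    obtain ⟨g, hg⟩ := F.map_surjective (show F.obj P.X ⟶ F.obj Q.X from f.f)
    refine ⟨⟨P.p ≫ g ≫ Q.p, by simp⟩, Karoubi.hom_ext _ _ ?_⟩
    simp only [Functor.mapKaroubi_map_f, Functor.map_comp, hg]
    exact f.comm

lemma Functor.essSurj_mapKaroubi [F.Full] [F.Faithful]
    (hF : ∀ Y : D, ∃ X : C, Nonempty (Retract Y (F.obj X))) : F.mapKaroubi.EssSurj where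
  mem_essImage Q := by
    obtain ⟨X, ⟨h⟩⟩ := hF Q.X
    obtain ⟨p, hp⟩ := F.map_surjective (h.r ≫ Q.p ≫ h.i)
    have hpp : p ≫ p = p := F.map_injective (by simp [hp])
    let e : (⟨F.obj X, F.map p, by rw [← F.map_comp, hpp]⟩ : Karoubi D) ≅ Q :=
      { hom := ⟨h.r ≫ Q.p, by simp [hp]⟩
        inv := ⟨Q.p ≫ h.i, by simp [hp]⟩
        hom_inv_id := by ext; simp [hp]
        inv_hom_id := by ext; simp }
    exact ⟨⟨X, p, hpp⟩, ⟨e⟩⟩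

noncomputable def Idempotents.karoubiEquivalenceOfRetracts [IsIdempotentComplete D] [F.Full]
    [F.Faithful] (hF : ∀ Y : D, ∃ X : C, Nonempty (Retract Y (F.obj X))) : Karoubi C ≌ D :=
  have := F.essSurj_mapKaroubi hF
  have : F.mapKaroubi.IsEquivalence := { }
  F.mapKaroubi.asEquivalence.trans (toKaroubiEquivalence D).symm

end Karoubi

section Presheaf

variable {C : Type u} [SmallCategory C]

lemma isTiny_yoneda_obj (X : C) : isTiny (Cᵒᵖ ⥤ Type u) (yoneda.obj X) :=
  ⟨preservesColimits_of_natIso (curriedYonedaLemma.app (op X)).symm⟩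

lemma exists_retract_yoneda_obj_of_isTiny {P : Cᵒᵖ ⥤ Type u} (hP : isTiny _ P) :
    ∃ X : C, Nonempty (Retract P (yoneda.obj X)) := by
  obtain ⟨_⟩ := hP
  obtain ⟨j, s, hs⟩ := Types.jointly_surjective_of_isColimit
    (isColimitOfPreserves (coyoneda.obj (op P)) (Presheaf.isColimitTautologicalCocone P)) (𝟙 P)
  exact ⟨j.left, ⟨s, j.hom, hs⟩⟩

end Presheaf

end CategoryTheory

/-- The Karoubi envelope of a small category is its Cauchy completion: it is equivalent to
the full subcategory of tiny presheaves, i.e. presheaves `P` such that `Hom(P, −)`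
preserves all small colimits. -/
theorem karoubi_equiv_tiny_presheaves {C : Type} [SmallCategory C] :
    Nonempty (Karoubi C ≌
      ObjectProperty.FullSubcategory (fun P : Cᵒᵖ ⥤ Type =>
        Nonempty (PreservesColimits (coyoneda.obj (Opposite.op P) :
          (Cᵒᵖ ⥤ Type) ⥤ Type)))) := by
  have := isIdempotentComplete_of_hasEqualizers (Cᵒᵖ ⥤ Type)
  refine ⟨karoubiEquivalenceOfRetracts (D := (isTiny _).FullSubcategory)
    ((isTiny _).lift yoneda isTiny_yoneda_obj) fun P => ?_⟩
  obtain ⟨X, ⟨h⟩⟩ := exists_retract_yoneda_obj_of_isTiny P.property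
  exact ⟨X, ⟨ObjectProperty.homMk h.i, ObjectProperty.homMk h.r, by ext1; exact h.retract⟩⟩
end

section
/- Let R be a commutative ring and M an R-module. The R-linear corepresentable functor Hom_R(M, −) : ModuleCat R ⥤ ModuleCat R (i.e. (linearCoyoneda R (ModuleCat R)).obj (Opposite.op (ModuleCat.of R M))) preserves all small colimits if and only if M is finitely generated and projective. In other words, the tiny objects of ModuleCat R are exactly the finitely generated projective modules. -/
/-!
If `Hom(M, −)` preserves colimits, it preserves epimorphisms, so `M` is projective. Then `M` is
a retract of the free module `⨁_{m : M} R`, and the section `M → ⨁ R` is an element of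
`Hom(M, ⨁ R) = ⨁ Hom(M, R)`, hence lands in finitely many summands: `M` is finitely generated.
Conversely, for `M` finitely generated projective, `Hom(M, −) ≅ M^∨ ⊗ −` is a left adjoint.
-/

open CategoryTheory CategoryTheory.Limits

universe u

lemma ModuleCat.iSup_range_ι_eq_top {R : Type u} [Ring R] {J : Type*} [Category J]
    {K : J ⥤ ModuleCat.{u} R} {c : Cocone K} (hc : IsColimit c) :
    (⨆ j, LinearMap.range (c.ι.app j).hom : Submodule R c.pt) = ⊤ := by
  set S : Submodule R c.pt := ⨆ j, LinearMap.range (c.ι.app j).hom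
  have hmkQ : ModuleCat.ofHom S.mkQ = 0 :=
    hc.hom_ext fun j => ModuleCat.hom_ext <| LinearMap.ext fun y =>
      (Submodule.Quotient.mk_eq_zero S).2 (Submodule.mem_iSup_of_mem j ⟨y, rfl⟩)
  rw [← Submodule.ker_mkQ S, ← ModuleCat.hom_ofHom S.mkQ, hmkQ, ModuleCat.hom_zero,
    LinearMap.ker_zero]

section

variable {R : Type u} [CommRing R] {M : Type u} [AddCommGroup M] [Module R M]

lemma ModuleCat.exists_finset_range_le_of_preservesColimit {J : Type*} [Category J]
    {K : J ⥤ ModuleCat.{u} R} {c : Cocone K} (hc : IsColimit c)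
    [PreservesColimit K ((linearCoyoneda R (ModuleCat.{u} R)).obj (Opposite.op (ModuleCat.of R M)))]
    (g : ModuleCat.of R M ⟶ c.pt) :
    ∃ t : Finset J, LinearMap.range g.hom ≤ ⨆ j ∈ t, LinearMap.range (c.ι.app j).hom := by
  set F := (linearCoyoneda R (ModuleCat.{u} R)).obj (Opposite.op (ModuleCat.of R M))
  have hg : g ∈ ⨆ j, LinearMap.range ((F.mapCocone c).ι.app j).hom :=
    (ModuleCat.iSup_range_ι_eq_top (isColimitOfPreserves F hc)).ge Submodule.mem_top
  obtain ⟨t, ht⟩ := Submodule.mem_iSup_iff_exists_finset.1 hg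
  set P : Submodule R c.pt := ⨆ j ∈ t, LinearMap.range (c.ι.app j).hom
  have hker : ⨆ j ∈ t, LinearMap.range ((F.mapCocone c).ι.app j).hom ≤
      LinearMap.ker (F.map (ModuleCat.ofHom P.mkQ)).hom := by
    refine iSup₂_le fun j hj => ?_
    rintro _ ⟨h, rfl⟩
    refine ModuleCat.hom_ext (LinearMap.ext fun x => (Submodule.Quotient.mk_eq_zero P).2 ?_)
    change (c.ι.app j).hom (h.hom x) ∈ P
    exact Submodule.mem_iSup_of_mem j (Submodule.mem_iSup_of_mem hj ⟨h.hom x, rfl⟩)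
  refine ⟨t, ?_⟩
  rintro _ ⟨x, rfl⟩
  have hgq : g ≫ ModuleCat.ofHom P.mkQ = 0 := hker ht
  exact (Submodule.Quotient.mk_eq_zero P).1 congr($hgq x)

open DirectSum in
lemma Module.Finite.of_projective_of_preservesColimitsOfShape [Module.Projective R M]
    [PreservesColimitsOfShape (Discrete M)
      ((linearCoyoneda R (ModuleCat.{u} R)).obj (Opposite.op (ModuleCat.of R M)))] :
    Module.Finite R M := by
  classical
  let π : (⨁ _ : M, R) →ₗ[R] M := toModule R M M (LinearMap.toSpanSingleton R M)
  have hπ : Function.Surjective π := fun m => ⟨lof R M (fun _ => R) m 1, by simp [π]⟩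
  obtain ⟨s, hs⟩ := Module.projective_lifting_property π LinearMap.id hπ
  set c := ModuleCat.coproductCocone fun _ : M => ModuleCat.of R R
  obtain ⟨t, ht⟩ := ModuleCat.exists_finset_range_le_of_preservesColimit
    (ModuleCat.coproductCoconeIsColimit _) (ModuleCat.ofHom s : _ ⟶ c.pt)
  set P : Submodule R c.pt := ⨆ j ∈ t, LinearMap.range (c.ι.app j).hom
  have : Module.Finite R P :=
    Module.Finite.iff_fg.2 (Submodule.fg_biSup t _ fun _ _ => Submodule.fg_range (M := R) _)
  exact Module.Finite.of_surjective (π ∘ₗ P.subtype) fun m =>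
    ⟨⟨s m, ht ⟨m, rfl⟩⟩, congr($hs m)⟩

lemma Module.Projective.of_preservesEpimorphisms_linearCoyoneda
    [((linearCoyoneda R (ModuleCat.{u} R)).obj
      (Opposite.op (ModuleCat.of R M))).PreservesEpimorphisms] :
    Module.Projective R M := by
  refine Module.Projective.of_lifting_property'' fun f hf => ?_
  have : Epi (ModuleCat.ofHom f) := (ModuleCat.epi_iff_surjective _).2 hf
  obtain ⟨h, hh⟩ := (ModuleCat.epi_iff_surjective _).1
    (((linearCoyoneda R (ModuleCat.{u} R)).obj (Opposite.op (ModuleCat.of R M))).map_epi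
      (ModuleCat.ofHom f)) (𝟙 (ModuleCat.of R M))
  exact ⟨h.hom, congr(ModuleCat.Hom.hom $hh)⟩

noncomputable def tensorLeftDualIsoLinearCoyonedaObj [Module.Finite R M] [Module.Projective R M] :
    MonoidalCategory.tensorLeft (ModuleCat.of R (Module.Dual R M)) ≅
      (linearCoyoneda R (ModuleCat.{u} R)).obj (Opposite.op (ModuleCat.of R M)) :=
  NatIso.ofComponents
    (fun N => (dualTensorHomEquiv R M N ≪≫ₗ
      (ModuleCat.homLinearEquiv (S := R) (M := ModuleCat.of R M) (N := N)).symm).toModuleIso)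
    (fun {N N'} g => by
      refine ModuleCat.hom_ext (TensorProduct.ext' fun f y => ?_)
      refine ModuleCat.hom_ext (LinearMap.ext fun v => ?_)
      change dualTensorHom R M N' (f ⊗ₜ g y) v = g (dualTensorHom R M N (f ⊗ₜ y) v)
      simp only [dualTensorHom_apply, map_smul])

end

/-- The tiny objects of the category of `R`-modules are exactly the finitely generated
projective modules: `Hom_R(M, −)` preserves all small colimits iff `M` is f.g. projective. -/
theorem moduleCat_tiny_iff_fg_projective (R : Type u) [CommRing R]
    (M : Type u) [AddCommGroup M] [Module R M] :
    Nonempty (PreservesColimits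
      ((linearCoyoneda R (ModuleCat.{u} R)).obj (Opposite.op (ModuleCat.of R M)))) ↔
    Module.Finite R M ∧ Module.Projective R M := by
  constructor
  · rintro ⟨_⟩
    have : Module.Projective R M := .of_preservesEpimorphisms_linearCoyoneda
    exact ⟨.of_projective_of_preservesColimitsOfShape, this⟩
  · rintro ⟨_, _⟩
    exact ⟨preservesColimits_of_natIso tensorLeftDualIsoLinearCoyonedaObj⟩
end

section
/- Let B be a bicategory, X and Y objects, and (f, g, φ, γ) a 2-condensation of X onto Y: f : X ⟶ Y, g : Y ⟶ X, φ : g ≫ f ⟶ 𝟙 Y, γ : 𝟙 Y ⟶ g ≫ f with γ ≫ φ = 𝟙 (𝟙 Y). Suppose f admits a right adjoint h : Y ⟶ X, with adjunction data unit η : 𝟙 X ⟶ f ≫ h and counit ε : h ≫ f ⟶ 𝟙 Y. Define γ̃ : 𝟙 Y ⟶ h ≫ f as the composite: γ, then g ◁ (λ_ f).inv, then g ◁ (η ▷ f), then the associator 2-isomorphisms rearranging g ≫ ((f ≫ h) ≫ f) into (g ≫ f) ≫ (h ≫ f), then φ ▷ (h ≫ f), then (λ_ (h ≫ f)).hom.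 Then γ̃ ≫ ε = 𝟙 (𝟙 Y); consequently (f, h, ε, γ̃) is again a 2-condensation of X onto Y, whose 2-morphism h ≫ f ⟶ 𝟙 Y is the counit of the adjunction f ⊣ h. -/
/-!
Composing `γ̃` with the counit and exchanging `φ ▷ (h ≫ f)` past `ε'` turns `γ̃ ≫ ε'` into
`γ`, then `g` whiskered with the left zigzag of `f ⊣ h`, then `φ`. The zigzag is the identity
by the triangle identity, leaving `γ ≫ φ = 𝟙`.
-/

open CategoryTheory Bicategory

namespace CategoryTheory.Bicategory

variable {B : Type*} [Bicategory B] {X Y : B}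

theorem whiskerRight_comp_leftUnitor_hom_comp {a b : Y ⟶ Y} (φ : a ⟶ 𝟙 Y) (ε' : b ⟶ 𝟙 Y) :
    φ ▷ b ≫ (λ_ b).hom ≫ ε' = a ◁ ε' ≫ (ρ_ a).hom ≫ φ := by
  rw [← leftUnitor_naturality, ← whisker_exchange_assoc, unitors_equal, rightUnitor_naturality]

theorem whiskerLeft_unit_comp_whiskerRight_comp_counit_eq {f : X ⟶ Y} {g h : Y ⟶ X}
    (φ : g ≫ f ⟶ 𝟙 Y) (η : 𝟙 X ⟶ f ≫ h) (ε' : h ≫ f ⟶ 𝟙 Y)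
    (left_triangle :
      (λ_ f).inv ≫ η ▷ f ≫ (α_ f h f).hom ≫ f ◁ ε' ≫ (ρ_ f).hom = 𝟙 f) :
    g ◁ (λ_ f).inv ≫ g ◁ (η ▷ f) ≫ g ◁ (α_ f h f).hom ≫ (α_ g f (h ≫ f)).inv ≫
      φ ▷ (h ≫ f) ≫ (λ_ (h ≫ f)).hom ≫ ε' = φ := by
  rw [whiskerRight_comp_leftUnitor_hom_comp, ← associator_inv_naturality_right_assoc,
    ← whiskerLeft_rightUnitor_assoc]
  simp only [← whiskerLeft_comp_assoc]
  rw [left_triangle, whiskerLeft_id, Category.id_comp]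

end CategoryTheory.Bicategory

theorem unital_condensation_of_right_adjoint_general {B : Type*} [Bicategory B] {X Y : B}
    (f : X ⟶ Y) (g : Y ⟶ X) (φ : g ≫ f ⟶ 𝟙 Y) (γ : 𝟙 Y ⟶ g ≫ f)
    (hγφ : γ ≫ φ = 𝟙 (𝟙 Y))
    (h : Y ⟶ X) (η : 𝟙 X ⟶ f ≫ h) (ε' : h ≫ f ⟶ 𝟙 Y)
    (left_triangle :
      (λ_ f).inv ≫ η ▷ f ≫ (α_ f h f).hom ≫ f ◁ ε' ≫ (ρ_ f).hom = 𝟙 f) :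
    (γ ≫ g ◁ (λ_ f).inv ≫ g ◁ (η ▷ f) ≫ g ◁ (α_ f h f).hom ≫
      (α_ g f (h ≫ f)).inv ≫ φ ▷ (h ≫ f) ≫ (λ_ (h ≫ f)).hom) ≫ ε' = 𝟙 (𝟙 Y) := by
  simp only [Category.assoc]
  rw [whiskerLeft_unit_comp_whiskerRight_comp_counit_eq φ η ε' left_triangle, hγφ]

/-- A 2-condensation whose first leg `f` admits a right adjoint `h` can be promoted to a
unital condensation with legs `f` and `h`: the 2-morphism `γ̃ : 𝟙 Y ⟶ h ≫ f` built from
`γ`, the unit `η`, and `φ` is a section of the counit `ε`. -/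
theorem unital_condensation_of_right_adjoint {B : Type*} [Bicategory B] {X Y : B}
    (f : X ⟶ Y) (g : Y ⟶ X) (φ : g ≫ f ⟶ 𝟙 Y) (γ : 𝟙 Y ⟶ g ≫ f)
    (hγφ : γ ≫ φ = 𝟙 (𝟙 Y))
    (h : Y ⟶ X) (η : 𝟙 X ⟶ f ≫ h) (ε' : h ≫ f ⟶ 𝟙 Y)
    (left_triangle :
      (λ_ f).inv ≫ η ▷ f ≫ (α_ f h f).hom ≫ f ◁ ε' ≫ (ρ_ f).hom = 𝟙 f)
    (right_triangle :
      (ρ_ h).inv ≫ h ◁ η ≫ (α_ h f h).inv ≫ ε' ▷ h ≫ (λ_ h).hom = 𝟙 h) :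
    (γ ≫ g ◁ (λ_ f).inv ≫ g ◁ (η ▷ f) ≫ g ◁ (α_ f h f).hom ≫
      (α_ g f (h ≫ f)).inv ≫ φ ▷ (h ≫ f) ≫ (λ_ (h ≫ f)).hom) ≫ ε' = 𝟙 (𝟙 Y) :=
  unital_condensation_of_right_adjoint_general f g φ γ hγφ h η ε' left_triangle
end

section
/- Let B be a bicategory, X and Y objects, and (f, g, φ, γ) a 2-condensation of X onto Y: f : X ⟶ Y, g : Y ⟶ X, φ : g ≫ f ⟶ 𝟙 Y, γ : 𝟙 Y ⟶ g ≫ f with γ ≫ φ = 𝟙 (𝟙 Y). Suppose g admits a left adjoint k : X ⟶ Y, with adjunction data unit η : 𝟙 X ⟶ k ≫ g and counit ε : g ≫ k ⟶ 𝟙 Y. Define γ' : 𝟙 Y ⟶ g ≫ k as the composite: γ, then ((ρ_ g).inv ▷ f), then ((g ◁ η) ▷ f), then the associator 2-isomorphisms rearranging (g ≫ (k ≫ g)) ≫ f into (g ≫ k) ≫ (g ≫ f), then (g ≫ k) ◁ φ, then (ρ_ (g ≫ k)).hom. Then γ' ≫ ε = 𝟙 (𝟙 Y); consequently (k, g, ε,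 γ') is a 2-condensation of X onto Y whose 2-morphism g ≫ k ⟶ 𝟙 Y is the counit of the adjunction k ⊣ g. -/
open CategoryTheory Bicategory

namespace CategoryTheory.Bicategory

variable {B : Type*} [Bicategory B]

theorem whiskerLeft_rightUnitor_comp_eq_whiskerRight_leftUnitor_comp {a : B} {m n : a ⟶ a}
    (σ : m ⟶ 𝟙 a) (τ : n ⟶ 𝟙 a) :
    m ◁ τ ≫ (ρ_ m).hom ≫ σ = σ ▷ n ≫ (λ_ n).hom ≫ τ := by
  rw [← rightUnitor_naturality, ← leftUnitor_naturality, unitors_equal,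
    reassoc_of% whisker_exchange]

theorem rightUnitor_inv_whiskerLeft_unit_comp_eq_leftUnitor_inv {X Y : B} {g : Y ⟶ X}
    {k : X ⟶ Y} {η : 𝟙 X ⟶ k ≫ g} {ε' : g ≫ k ⟶ 𝟙 Y}
    (right_triangle : (ρ_ g).inv ≫ g ◁ η ≫ (α_ g k g).inv ≫ ε' ▷ g ≫ (λ_ g).hom = 𝟙 g) :
    (ρ_ g).inv ≫ g ◁ η ≫ (α_ g k g).inv ≫ ε' ▷ g = (λ_ g).inv :=
  Iso.comp_hom_eq_id _ |>.mp (by simpa only [Category.assoc] using right_triangle)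

end CategoryTheory.Bicategory

theorem unital_condensation_of_left_adjoint_general {B : Type*} [Bicategory B] {X Y : B}
    (f : X ⟶ Y) (g : Y ⟶ X) (φ : g ≫ f ⟶ 𝟙 Y) (γ : 𝟙 Y ⟶ g ≫ f)
    (hγφ : γ ≫ φ = 𝟙 (𝟙 Y))
    (k : X ⟶ Y) (η : 𝟙 X ⟶ k ≫ g) (ε' : g ≫ k ⟶ 𝟙 Y)
    (right_triangle :
      (ρ_ g).inv ≫ g ◁ η ≫ (α_ g k g).inv ≫ ε' ▷ g ≫ (λ_ g).hom = 𝟙 g) :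
    (γ ≫ (ρ_ g).inv ▷ f ≫ (g ◁ η) ▷ f ≫ (α_ g k g).inv ▷ f ≫
      (α_ (g ≫ k) g f).hom ≫ (g ≫ k) ◁ φ ≫ (ρ_ (g ≫ k)).hom) ≫ ε' = 𝟙 (𝟙 Y) := by
  -- `ε'` acts on the factor `g ≫ k` and `φ` on `g ≫ f`, so `ε'` can be applied first,
  -- where it meets `η` in the right triangle.
  calc _ = γ ≫ ((ρ_ g).inv ≫ g ◁ η ≫ (α_ g k g).inv) ▷ f ≫ (α_ (g ≫ k) g f).hom ≫
          (g ≫ k) ◁ φ ≫ (ρ_ (g ≫ k)).hom ≫ ε' := by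
        simp only [comp_whiskerRight, Category.assoc]
    _ = γ ≫ ((ρ_ g).inv ≫ g ◁ η ≫ (α_ g k g).inv ≫ ε' ▷ g) ▷ f ≫ (α_ (𝟙 Y) g f).hom ≫
          (λ_ (g ≫ f)).hom ≫ φ := by
        rw [whiskerLeft_rightUnitor_comp_eq_whiskerRight_leftUnitor_comp,
          ← associator_naturality_left_assoc]
        simp only [comp_whiskerRight, Category.assoc]
    _ = γ ≫ φ := by
        rw [rightUnitor_inv_whiskerLeft_unit_comp_eq_leftUnitor_inv right_triangle]
        simp
    _ = 𝟙 (𝟙 Y) := hγφ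

/-- A 2-condensation whose second leg `g` admits a left adjoint `k` can be promoted to a
unital condensation with legs `k` and `g`: the 2-morphism `γ' : 𝟙 Y ⟶ g ≫ k` built from
`γ`, the unit `η`, and `φ` is a section of the counit `ε`. -/
theorem unital_condensation_of_left_adjoint {B : Type*} [Bicategory B] {X Y : B}
    (f : X ⟶ Y) (g : Y ⟶ X) (φ : g ≫ f ⟶ 𝟙 Y) (γ : 𝟙 Y ⟶ g ≫ f)
    (hγφ : γ ≫ φ = 𝟙 (𝟙 Y))
    (k : X ⟶ Y) (η : 𝟙 X ⟶ k ≫ g) (ε' : g ≫ k ⟶ 𝟙 Y)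
    (left_triangle :
      (λ_ k).inv ≫ η ▷ k ≫ (α_ k g k).hom ≫ k ◁ ε' ≫ (ρ_ k).hom = 𝟙 k)
    (right_triangle :
      (ρ_ g).inv ≫ g ◁ η ≫ (α_ g k g).inv ≫ ε' ▷ g ≫ (λ_ g).hom = 𝟙 g) :
    (γ ≫ (ρ_ g).inv ▷ f ≫ (g ◁ η) ▷ f ≫ (α_ g k g).inv ▷ f ≫
      (α_ (g ≫ k) g f).hom ≫ (g ≫ k) ◁ φ ≫ (ρ_ (g ≫ k)).hom) ≫ ε' = 𝟙 (𝟙 Y) :=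
  unital_condensation_of_left_adjoint_general f g φ γ hγφ k η ε' right_triangle
end

section
/- Let B be a bicategory, X and Y objects, and (f, g, φ, γ) a 2-condensation of X onto Y: f : X ⟶ Y, g : Y ⟶ X, φ : g ≫ f ⟶ 𝟙 Y, γ : 𝟙 Y ⟶ g ≫ f with γ ≫ φ = 𝟙 (𝟙 Y). Set e := f ≫ g : X ⟶ X, and define μ : e ≫ e ⟶ e as the composite of the associator 2-isomorphisms rearranging (f ≫ g) ≫ (f ≫ g) into f ≫ ((g ≫ f) ≫ g), then f ◁ (φ ▷ g), then f ◁ (λ_ g).hom; dually define δ : e ⟶ e ≫ e using γ in place of φ with the inverse unitor and associators. Then (e, μ, δ) satisfies all the axioms of a nonunital special Frobenius algebra in the monoidal category of endomorphisms of X (with composition of 1-morphisms as the tensor product): δ ≫ μ = 𝟙 e (specialness), μ is associative and δ is coassociative up to the associator 2-isomorphisms, and both Frobenius identities hold. -/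
open CategoryTheory Bicategory

variable {B : Type*} [Bicategory B] {X Y : B}

/-- The multiplication on `e = f ≫ g` induced by a 2-condensation `(f, g, φ, γ)`. -/
noncomputable def condensationMul (f : X ⟶ Y) (g : Y ⟶ X) (φ : g ≫ f ⟶ 𝟙 Y) :
    (f ≫ g) ≫ (f ≫ g) ⟶ f ≫ g :=
  (α_ f g (f ≫ g)).hom ≫ f ◁ (α_ g f g).inv ≫ f ◁ (φ ▷ g) ≫ f ◁ (λ_ g).hom

/-- The comultiplication on `e = f ≫ g` induced by a 2-condensation `(f, g, φ, γ)`. -/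
noncomputable def condensationComul (f : X ⟶ Y) (g : Y ⟶ X) (γ : 𝟙 Y ⟶ g ≫ f) :
    f ≫ g ⟶ (f ≫ g) ≫ (f ≫ g) :=
  f ◁ (λ_ g).inv ≫ f ◁ (γ ▷ g) ≫ f ◁ (α_ g f g).hom ≫ (α_ f g (f ≫ g)).inv

/-- From a 2-condensation `(f, g, φ, γ)` of `X` onto `Y`, the endomorphism `e = f ≫ g`
acquires the structure of a nonunital special Frobenius algebra in the monoidal category
of endomorphisms of `X`: specialness, associativity, coassociativity, and both Frobenius
identities hold. -/
theorem condensation_monad_special_frobenius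
    (f : X ⟶ Y) (g : Y ⟶ X) (φ : g ≫ f ⟶ 𝟙 Y) (γ : 𝟙 Y ⟶ g ≫ f)
    (hγφ : γ ≫ φ = 𝟙 (𝟙 Y)) :
    condensationComul f g γ ≫ condensationMul f g φ = 𝟙 (f ≫ g) ∧
    (condensationMul f g φ ▷ (f ≫ g)) ≫ condensationMul f g φ =
      (α_ (f ≫ g) (f ≫ g) (f ≫ g)).hom ≫ ((f ≫ g) ◁ condensationMul f g φ) ≫
        condensationMul f g φ ∧
    condensationComul f g γ ≫ (condensationComul f g γ ▷ (f ≫ g)) ≫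
        (α_ (f ≫ g) (f ≫ g) (f ≫ g)).hom =
      condensationComul f g γ ≫ ((f ≫ g) ◁ condensationComul f g γ) ∧
    condensationMul f g φ ≫ condensationComul f g γ =
      (condensationComul f g γ ▷ (f ≫ g)) ≫ (α_ (f ≫ g) (f ≫ g) (f ≫ g)).hom ≫
        ((f ≫ g) ◁ condensationMul f g φ) ∧
    condensationMul f g φ ≫ condensationComul f g γ =
      ((f ≫ g) ◁ condensationComul f g γ) ≫ (α_ (f ≫ g) (f ≫ g) (f ≫ g)).inv ≫
        (condensationMul f g φ ▷ (f ≫ g)) := by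
  refine ⟨?_, ?_, ?_, ?_, ?_⟩
  · -- specialness
    simp only [condensationMul, condensationComul, Category.assoc, Iso.inv_hom_id_assoc,
      ← Bicategory.whiskerLeft_comp, Iso.hom_inv_id_assoc, ← comp_whiskerRight_assoc, hγφ]
    simp
  · -- associativity
    have h1 : g ◁ f ◁ (φ ▷ g ≫ (λ_ g).hom) ≫ (α_ g f g).inv ≫ φ ▷ g
        = (α_ g f ((g ≫ f) ≫ g)).inv ≫ φ ▷ ((g ≫ f) ≫ g) ≫
            𝟙 Y ◁ (φ ▷ g ≫ (λ_ g).hom) := by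
      rw [associator_inv_naturality_right_assoc, whisker_exchange]
    have h2 := congrArg (fun x => f ◁ x) h1
    simp only [Bicategory.whiskerLeft_comp, Category.assoc] at h2
    simp only [condensationMul, whisker_exchange]
    simp
    slice_rhs 5 8 => rw [h2]
    bicategory
  · -- coassociativity
    have h1 : γ ▷ g ≫ (α_ g f g).hom ≫ g ◁ f ◁ ((λ_ g).inv ≫ γ ▷ g)
        = 𝟙 Y ◁ ((λ_ g).inv ≫ γ ▷ g) ≫ γ ▷ ((g ≫ f) ≫ g) ≫
            (α_ g f ((g ≫ f) ≫ g)).hom := by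
      rw [whisker_exchange_assoc, associator_naturality_right]
    have h2 := congrArg (fun x => f ◁ x) h1
    simp only [Bicategory.whiskerLeft_comp, Category.assoc] at h2
    simp only [condensationComul, whisker_exchange]
    simp
    slice_rhs 2 5 => rw [h2]
    bicategory
  · -- Frobenius identity 1
    have h1 : φ ≫ γ = (λ_ (g ≫ f)).inv ≫ γ ▷ (g ≫ f) ≫ (g ≫ f) ◁ φ ≫
        (ρ_ (g ≫ f)).hom := by
      rw [← whisker_exchange_assoc]
      simp [unitors_equal]
    have h2 := congrArg (fun x => f ◁ x ▷ g) h1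
    simp only [comp_whiskerRight, Bicategory.whiskerLeft_comp, Category.assoc] at h2
    simp only [condensationMul, condensationComul, whisker_exchange]
    simp
    slice_lhs 2 3 => rw [h2]
    bicategory
  · -- Frobenius identity 2
    have h1 : φ ≫ γ = (ρ_ (g ≫ f)).inv ≫ (g ≫ f) ◁ γ ≫ φ ▷ (g ≫ f) ≫
        (λ_ (g ≫ f)).hom := by
      rw [whisker_exchange_assoc]
      simp [unitors_equal]
    have h2 := congrArg (fun x => f ◁ x ▷ g) h1
    simp only [comp_whiskerRight, Bicategory.whiskerLeft_comp, Category.assoc] at h2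
    simp only [condensationMul, condensationComul, whisker_exchange]
    simp
    slice_lhs 2 3 => rw [h2]
    bicategory
end

section
/- Let C be a monoidal category and (A, μ, η) a monoid object in C (with multiplication μ : A ⊗ A ⟶ A and unit η : 𝟙_C ⟶ A satisfying the usual unit and associativity laws). Let m be an object of C, a : A ⊗ m ⟶ m a morphism satisfying the associativity of actions (α_ A A m).inv ≫ (μ ▷ m) ≫ a = (A ◁ a) ≫ a (as morphisms A ⊗ (A ⊗ m) ⟶ m), and suppose there exists a morphism c : m ⟶ A ⊗ m with c ≫ a = 𝟙 m. Then the unit acts as the identity on m: (λ_ m).inv ≫ (η ▷ m) ≫ a = 𝟙 m. -/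
open CategoryTheory MonoidalCategory

/-- For a monoid object `(A, μ, η)` in a monoidal category and an associative action
`a : A ⊗ m ⟶ m` admitting a section `c` (i.e. `c ≫ a = 𝟙 m`), the unit automatically
acts as the identity on `m`. -/
theorem unit_acts_as_identity {C : Type*} [Category C] [MonoidalCategory C]
    (A : C) (μ : A ⊗ A ⟶ A) (η : 𝟙_ C ⟶ A)
    (one_mul : (η ▷ A) ≫ μ = (λ_ A).hom)
    (mul_one : (A ◁ η) ≫ μ = (ρ_ A).hom)
    (mul_assoc : (μ ▷ A) ≫ μ = (α_ A A A).hom ≫ (A ◁ μ) ≫ μ)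
    (m : C) (a : A ⊗ m ⟶ m)
    (act_assoc : (α_ A A m).inv ≫ (μ ▷ m) ≫ a = (A ◁ a) ≫ a)
    (c : m ⟶ A ⊗ m) (hca : c ≫ a = 𝟙 m) :
    (λ_ m).inv ≫ (η ▷ m) ≫ a = 𝟙 m := by
  have key : a ≫ (λ_ m).inv ≫ (η ▷ m) ≫ a = a := by
    have h1 : a ≫ (λ_ m).inv = (λ_ (A ⊗ m)).inv ≫ (𝟙_ C ◁ a) := by
      rw [leftUnitor_inv_naturality]
    have h2 : (𝟙_ C ◁ a) ≫ (η ▷ m) = (η ▷ (A ⊗ m)) ≫ (A ◁ a) := by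
      rw [whisker_exchange]
    calc a ≫ (λ_ m).inv ≫ (η ▷ m) ≫ a
        = (λ_ (A ⊗ m)).inv ≫ (η ▷ (A ⊗ m)) ≫ (A ◁ a) ≫ a := by
          rw [← Category.assoc, h1]; simp only [Category.assoc]
          rw [← Category.assoc (𝟙_ C ◁ a), h2]; simp only [Category.assoc]
      _ = (λ_ (A ⊗ m)).inv ≫ (η ▷ (A ⊗ m)) ≫ (α_ A A m).inv ≫ (μ ▷ m) ≫ a := by
          rw [act_assoc]
      _ = (((λ_ A).inv ≫ (η ▷ A) ≫ μ) ▷ m) ≫ a := by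
          rw [associator_inv_naturality_left_assoc]
          rw [← Category.assoc, show (λ_ (A ⊗ m)).inv ≫ (α_ (𝟙_ C) A m).inv = (λ_ A).inv ▷ m by
            simp [← cancel_mono (α_ (𝟙_ C) A m).hom]]
          simp [comp_whiskerRight]
      _ = a := by rw [one_mul]; simp
  have h : (c ≫ a) ≫ (λ_ m).inv ≫ (η ▷ m) ≫ a = c ≫ a := by
    simp only [Category.assoc]; rw [key]
  rw [hca] at h; simpa using h
end

section
/- Let C be abandoned monoidal category, let e be an object of C equipped with a nonunital special Frobenius structure (μ : e ⊗ e ⟶ e, δ : e ⟶ e ⊗ e satisfying specialness, associativity, coassociativity, and the Frobenius identities), and suppose e has a right dual e^∨, i.e. there is an exact pairing with evaluation ev : e^∨ ⊗ e ⟶ 𝟙_C and coevaluation coev : 𝟙_C ⟶ e ⊗ e^∨ satisfying the zig-zag identities. Then e^∨ also admits a nonunital special Frobenius structure: there exist μ' : e^∨ ⊗ e^∨ ⟶ e^∨ and δ' : e^∨ ⟶ e^∨ ⊗ e^∨ (the transposes of δ and μ under the duality) satisfying specialness δ' ≫ μ' = 𝟙 e^∨, associativity, coassociativity, and the Frobenius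 identities. -/
open CategoryTheory MonoidalCategory

namespace DualCondAux

open ExactPairing

variable {C : Type*} [Category C] [MonoidalCategory C]

/-- Tensor product of exact pairings. -/
instance pairTensor (X X' Y Y' : C) [ExactPairing X X'] [ExactPairing Y Y'] :
    ExactPairing (X ⊗ Y) (Y' ⊗ X') where
  coevaluation' := η_ X X' ⊗≫ X ◁ η_ Y Y' ▷ X' ⊗≫ 𝟙 ((X ⊗ Y) ⊗ (Y' ⊗ X'))
  evaluation' := 𝟙 ((Y' ⊗ X') ⊗ (X ⊗ Y)) ⊗≫ Y' ◁ ε_ X X' ▷ Y ⊗≫ ε_ Y Y'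
  coevaluation_evaluation' := by
    calc _ = 𝟙 _ ⊗≫ ((Y' ⊗ X' : C)) ◁ η_ X X' ⊗≫
          ((Y' ⊗ (X' ⊗ X) : C) ◁ ((λ_ X').inv ≫ η_ Y Y' ▷ X') ≫
            (Y' ◁ ε_ X X') ▷ ((Y ⊗ Y') ⊗ X')) ⊗≫ ε_ Y Y' ▷ ((Y' ⊗ X' : C)) ⊗≫ 𝟙 _ := by
          monoidal
      _ = 𝟙 _ ⊗≫ Y' ◁ (X' ◁ η_ X X' ⊗≫ ε_ X X' ▷ X') ⊗≫
          (Y' ◁ η_ Y Y' ⊗≫ ε_ Y Y' ▷ Y') ▷ X' ⊗≫ 𝟙 _ := by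
          rw [whisker_exchange]; monoidal
      _ = _ := by
          rw [coevaluation_evaluation'', coevaluation_evaluation'']; monoidal
  evaluation_coevaluation' := by
    calc _ = 𝟙 _ ⊗≫ η_ X X' ▷ ((X ⊗ Y : C)) ⊗≫
          ((((ρ_ X).inv ≫ X ◁ η_ Y Y') ▷ ((X' ⊗ (X ⊗ Y) : C))) ≫
            ((X ⊗ (Y ⊗ Y') : C)) ◁ ((α_ X' X Y).inv ≫ ε_ X X' ▷ Y ≫ (λ_ Y).hom)) ⊗≫
          ((X ⊗ Y : C)) ◁ ε_ Y Y' ⊗≫ 𝟙 _ := by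
          monoidal
      _ = 𝟙 _ ⊗≫ (η_ X X' ▷ X ⊗≫ X ◁ ε_ X X') ▷ Y ⊗≫
          X ◁ (η_ Y Y' ▷ Y ⊗≫ Y ◁ ε_ Y Y') ⊗≫ 𝟙 _ := by
          rw [← whisker_exchange]; monoidal
      _ = _ := by
          rw [evaluation_coevaluation'', evaluation_coevaluation'']; monoidal

instance hasRightDualTensor (X Y : C) [HasRightDual X] [HasRightDual Y] :
    HasRightDual (X ⊗ Y) := ⟨(Yᘁ : C) ⊗ (Xᘁ : C)⟩

@[simp] lemma dualTensor (X Y : C) [HasRightDual X] [HasRightDual Y] :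
    (((X ⊗ Y)ᘁ : C)) = (Yᘁ : C) ⊗ (Xᘁ : C) :=
  rfl

@[simp] lemma dualTensor_evaluation (X Y : C) [HasRightDual X] [HasRightDual Y] :
    ε_ (X ⊗ Y) ((X ⊗ Y)ᘁ) =
      𝟙 (((Yᘁ : C) ⊗ (Xᘁ : C)) ⊗ (X ⊗ Y)) ⊗≫ (Yᘁ : C) ◁ ε_ X (Xᘁ) ▷ Y ⊗≫ ε_ Y (Yᘁ) :=
  rfl

@[simp] lemma dualTensor_coevaluation (X Y : C) [HasRightDual X] [HasRightDual Y] :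
    η_ (X ⊗ Y) ((X ⊗ Y)ᘁ) =
      η_ X (Xᘁ) ⊗≫ X ◁ η_ Y (Yᘁ) ▷ (Xᘁ : C) ⊗≫ 𝟙 ((X ⊗ Y) ⊗ ((Yᘁ : C) ⊗ (Xᘁ : C))) :=
  rfl

@[simp] lemma pairTensor_evaluation (X X' Y Y' : C) [ExactPairing X X'] [ExactPairing Y Y'] :
    ε_ (X ⊗ Y) (Y' ⊗ X') = 𝟙 ((Y' ⊗ X') ⊗ (X ⊗ Y)) ⊗≫ Y' ◁ ε_ X X' ▷ Y ⊗≫ ε_ Y Y' :=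
  rfl

@[simp] lemma pairTensor_coevaluation (X X' Y Y' : C) [ExactPairing X X'] [ExactPairing Y Y'] :
    η_ (X ⊗ Y) (Y' ⊗ X') = η_ X X' ⊗≫ X ◁ η_ Y Y' ▷ X' ⊗≫ 𝟙 ((X ⊗ Y) ⊗ (Y' ⊗ X')) :=
  rfl

theorem mate_ext {X Y : C} [HasRightDual X] [HasRightDual Y] {f : X ⟶ Y} {g : (Yᘁ : C) ⟶ (Xᘁ : C)}
    (h : g ▷ X ≫ ε_ X (Xᘁ) = (Yᘁ : C) ◁ f ≫ ε_ Y (Yᘁ)) : fᘁ = g := by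
  have h2 := congrArg (tensorRightHomEquiv (Yᘁ : C) X (Xᘁ : C) (𝟙_ C)) h
  rw [tensorRightHomEquiv_whiskerRight_comp_evaluation,
    tensorRightHomEquiv_whiskerLeft_comp_evaluation] at h2
  exact ((cancel_mono _).mp h2).symm

theorem whiskerRight_mate {X Y A : C} [HasRightDual X] [HasRightDual Y] [HasRightDual A]
    (f : X ⟶ Y) : (f ▷ A)ᘁ = (Aᘁ : C) ◁ (fᘁ) := by
  apply mate_ext
  simp only [dualTensor_evaluation]
  dsimp only [dualTensor]
  calc _ = 𝟙 _ ⊗≫ (Aᘁ : C) ◁ (((fᘁ) ▷ X ≫ ε_ X (Xᘁ)) ▷ A) ⊗≫ ε_ A (Aᘁ) := by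
        monoidal
    _ = 𝟙 _ ⊗≫ (Aᘁ : C) ◁ ((((Yᘁ : C)) ◁ f ≫ ε_ Y (Yᘁ)) ▷ A) ⊗≫ ε_ A (Aᘁ) := by
        rw [rightAdjointMate_comp_evaluation]
    _ = _ := by
        monoidal

theorem whiskerLeft_mate {X Y A : C} [HasRightDual X] [HasRightDual Y] [HasRightDual A]
    (f : X ⟶ Y) : (A ◁ f)ᘁ = (fᘁ) ▷ (Aᘁ : C) := by
  apply mate_ext
  simp only [dualTensor_evaluation]
  dsimp only [dualTensor]
  calc _ = 𝟙 _ ⊗≫ ((rightAdjointMate f ▷ ((Aᘁ : C) ⊗ (A ⊗ X))) ≫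
            (Xᘁ : C) ◁ ((α_ (Aᘁ : C) A X).inv ≫ ε_ A (Aᘁ) ▷ X ≫ (λ_ X).hom)) ⊗≫
            ε_ X (Xᘁ) := by
        monoidal
    _ = 𝟙 _ ⊗≫ ((Yᘁ : C) ◁ ((α_ (Aᘁ : C) A X).inv ≫ ε_ A (Aᘁ) ▷ X ≫ (λ_ X).hom) ≫
            rightAdjointMate f ▷ X) ⊗≫ ε_ X (Xᘁ) := by
        rw [← whisker_exchange]
    _ = 𝟙 _ ⊗≫ (Yᘁ : C) ◁ (ε_ A (Aᘁ) ▷ X) ⊗≫ (rightAdjointMate f ▷ X ≫ ε_ X (Xᘁ)) := by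
        monoidal
    _ = 𝟙 _ ⊗≫ (Yᘁ : C) ◁ (ε_ A (Aᘁ) ▷ X) ⊗≫ ((Yᘁ : C) ◁ f ≫ ε_ Y (Yᘁ)) := by
        rw [rightAdjointMate_comp_evaluation]
    _ = 𝟙 _ ⊗≫ (Yᘁ : C) ◁ (ε_ A (Aᘁ) ▷ X ≫ 𝟙_ C ◁ f) ⊗≫ ε_ Y (Yᘁ) := by
        monoidal
    _ = 𝟙 _ ⊗≫ (Yᘁ : C) ◁ (((Aᘁ : C) ⊗ A) ◁ f ≫ ε_ A (Aᘁ) ▷ Y) ⊗≫ ε_ Y (Yᘁ) := by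
        rw [← whisker_exchange]
    _ = _ := by
        monoidal

theorem associator_hom_mate (X Y Z : C) [HasRightDual X] [HasRightDual Y] [HasRightDual Z] :
    ((α_ X Y Z).hom)ᘁ = (α_ (Zᘁ : C) (Yᘁ : C) (Xᘁ : C)).hom := by
  apply mate_ext
  simp only [dualTensor_evaluation]
  monoidal

theorem associator_inv_mate (X Y Z : C) [HasRightDual X] [HasRightDual Y] [HasRightDual Z] :
    ((α_ X Y Z).inv)ᘁ = (α_ (Zᘁ : C) (Yᘁ : C) (Xᘁ : C)).inv := by
  have h : ((α_ X Y Z).hom ≫ (α_ X Y Z).inv)ᘁ = 𝟙 _ := by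
    rw [Iso.hom_inv_id, rightAdjointMate_id]
  rw [comp_rightAdjointMate, associator_hom_mate] at h
  exact (Iso.comp_hom_eq_id (α_ (Zᘁ : C) (Yᘁ : C) (Xᘁ : C))).mp h

end DualCondAux

open DualCondAux in
/-- The dual of a condensation algebra is a condensation algebra: if `e` carries a
nonunital special Frobenius structure and `ed` is a right dual of `e` (via an exact
pairing), then `ed` also carries a nonunital special Frobenius structure. -/
theorem dual_condensation_algebra {C : Type*} [Category C] [MonoidalCategory C]
    (e : C) (μ : e ⊗ e ⟶ e) (δ : e ⟶ e ⊗ e)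
    (special : δ ≫ μ = 𝟙 e)
    (assoc : (μ ▷ e) ≫ μ = (α_ e e e).hom ≫ (e ◁ μ) ≫ μ)
    (coassoc : δ ≫ (δ ▷ e) ≫ (α_ e e e).hom = δ ≫ (e ◁ δ))
    (frobenius₁ : μ ≫ δ = (δ ▷ e) ≫ (α_ e e e).hom ≫ (e ◁ μ))
    (frobenius₂ : μ ≫ δ = (e ◁ δ) ≫ (α_ e e e).inv ≫ (μ ▷ e))
    (ed : C) (ev : ed ⊗ e ⟶ 𝟙_ C) (coev : 𝟙_ C ⟶ e ⊗ ed)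
    (zigzag₁ : ed ◁ coev ≫ (α_ ed e ed).inv ≫ ev ▷ ed = (ρ_ ed).hom ≫ (λ_ ed).inv)
    (zigzag₂ : coev ▷ e ≫ (α_ e ed e).hom ≫ e ◁ ev = (λ_ e).hom ≫ (ρ_ e).inv) :
    ∃ (μ' : ed ⊗ ed ⟶ ed) (δ' : ed ⟶ ed ⊗ ed),
      δ' ≫ μ' = 𝟙 ed ∧
      (μ' ▷ ed) ≫ μ' = (α_ ed ed ed).hom ≫ (ed ◁ μ') ≫ μ' ∧
      δ' ≫ (δ' ▷ ed) ≫ (α_ ed ed ed).hom = δ' ≫ (ed ◁ δ') ∧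
      μ' ≫ δ' = (δ' ▷ ed) ≫ (α_ ed ed ed).hom ≫ (ed ◁ μ') ∧
      μ' ≫ δ' = (ed ◁ δ') ≫ (α_ ed ed ed).inv ≫ (μ' ▷ ed) := by
  letI pe : ExactPairing e ed := ⟨coev, ev, zigzag₁, zigzag₂⟩
  letI he : HasRightDual e := ⟨ed⟩
  refine ⟨δᘁ, μᘁ, ?_, ?_, ?_, ?_, ?_⟩
  · have h := congrArg rightAdjointMate special
    rw [comp_rightAdjointMate, rightAdjointMate_id] at h
    exact h
  · have h := congrArg rightAdjointMate coassoc
    simp only [comp_rightAdjointMate, whiskerRight_mate, whiskerLeft_mate,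
      associator_hom_mate, Category.assoc] at h
    exact h.symm
  · have h := congrArg rightAdjointMate assoc
    simp only [comp_rightAdjointMate, whiskerRight_mate, whiskerLeft_mate,
      associator_hom_mate, Category.assoc] at h
    exact h.symm
  · have h := congrArg rightAdjointMate frobenius₁
    simp only [comp_rightAdjointMate, whiskerRight_mate, whiskerLeft_mate,
      associator_hom_mate, Category.assoc] at h
    exact h
  · have h := congrArg rightAdjointMate frobenius₂
    simp only [comp_rightAdjointMate, whiskerRight_mate, whiskerLeft_mate,
      associator_inv_mate, Category.assoc] at h
    exact h
end
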